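/- arXiv:1305.4165 — 2 statements merged into one kernel-verified Lean document; each statement's English description precedes it below -/
import Mathlib

section
/- If the chain maps f : V → W and f̃ : Ṽ → W are quasi-isomorphisms, then the canonical projection π_Ṽ : Cyl(f, f̃) → Ṽ, π_Ṽ(v + s w + ṽ) = ṽ, is a quasi-isomorphism of cochain complexes. -/
/-- An (unbounded) cochain complex of `K`-vector spaces.  The differential is
indexed by pairs of consecutive degrees (`i`, `j` with `i + 1 = j`) to avoid
dependent-type rewriting along equalities of degrees. -/
structure Cochain (K : Type) [Field K] where
  X : ℤ → Type
  [ab : ∀ n : ℤ, AddCommGroup (X n)]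
  [mod : ∀ n : ℤ, Module K (X n)]
  d : ∀ (i j : ℤ), i + 1 = j → (X i →ₗ[K] X j)
  dd : ∀ (i j k : ℤ) (hij : i + 1 = j) (hjk : j + 1 = k) (x : X i),
      d j k hjk (d i j hij x) = 0

attribute [instance] Cochain.ab Cochain.mod

/-- A chain map of cochain complexes of `K`-vector spaces. -/
structure ChainMap (K : Type) [Field K] (V W : Cochain K) where
  f : ∀ n : ℤ, V.X n →ₗ[K] W.X n
  comm : ∀ (i j : ℤ) (h : i + 1 = j) (x : V.X i),
      f j (V.d i j h x) = W.d i j h (f i x)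

/-- `φ` is a quasi-isomorphism: it induces an isomorphism on cohomology in every
degree, i.e. the induced map on cohomology classes is surjective (every cocycle
of the target is, up to a coboundary, the image of a cocycle) and injective
(a cocycle mapping to a coboundary is a coboundary). -/
def IsQuasiIso {K : Type} [Field K] {V W : Cochain K} (φ : ChainMap K V W) : Prop :=
  (∀ (n : ℤ) (y : W.X n), W.d n (n + 1) rfl y = 0 →
      ∃ (x : V.X n) (z : W.X (n - 1)),
        V.d n (n + 1) rfl x = 0 ∧
        φ.f n x = y + W.d (n - 1) n (by omega) z) ∧
  (∀ (n : ℤ) (x : V.X n), V.d n (n + 1) rfl x = 0 →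
      (∃ z : W.X (n - 1), φ.f n x = W.d (n - 1) n (by omega) z) →
      ∃ u : V.X (n - 1), x = V.d (n - 1) n (by omega) u)

/-- Transport along an equality of degrees. -/
def Cochain.cast {K : Type} [Field K] (V : Cochain K) {i j : ℤ} (h : i = j) :
    V.X i →ₗ[K] V.X j := by subst h; exact LinearMap.id

/-- The degree `n` component of the cylinder `Cyl(f, f̃) = V ⊕ sW ⊕ Ṽ`,
namely `V^n × W^(n-1) × Ṽ^n`  (recall `(sW)^n = W^(n-1)`). -/
abbrev CylX {K : Type} [Field K] (V W Vt : Cochain K) (n : ℤ) : Type :=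
  V.X n × W.X (n - 1) × Vt.X n

/-- The cylinder differential `∂^Cyl (v + s w + ṽ) = ∂v + s (f v - ∂w + f̃ ṽ) + ∂ṽ`. -/
def cylD {K : Type} [Field K] {V W Vt : Cochain K}
    (f : ChainMap K V W) (ft : ChainMap K Vt W)
    (i j : ℤ) (h : i + 1 = j) : CylX V W Vt i → CylX V W Vt j :=
  fun p =>
    (V.d i j h p.1,
     W.cast (show i = j - 1 by omega) (f.f i p.1)
       - W.d (i - 1) (j - 1) (by omega) p.2.1
       + W.cast (show i = j - 1 by omega) (ft.f i p.2.2),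
     Vt.d i j h p.2.2)

/-!
The kernel of `π_Ṽ` is, up to shift, the mapping cone of `f`, which is acyclic because `f` is a
quasi-isomorphism. Concretely: a cocycle `ṽ` lifts to the cocycle `(x, z, ṽ)` of the cylinder,
where `x` is a cocycle with `f x = -f̃ ṽ + ∂z`; and if `(v, w, ∂u)` is a cocycle, then
`f v = ∂(w - f̃ u)`, so `v = ∂u'`, and `w - f u' - f̃ u` is a cocycle of `W`, which is
`f c - ∂z'` for a cocycle `c`, giving `(v, w, ∂u) = ∂^Cyl (u' + c, z', u)`.
-/

namespace Cochain

variable {K : Type} [Field K] (V : Cochain K)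

@[simp]
lemma cast_refl {i : ℤ} (h : i = i) (x : V.X i) : V.cast h x = x := rfl

lemma cast_injective {i j : ℤ} (h : i = j) : Function.Injective (V.cast h) := by
  subst h
  exact Function.injective_id

lemma cast_d {i j j' : ℤ} (hij : i + 1 = j) (h : j = j') (x : V.X i) :
    V.cast h (V.d i j hij x) = V.d i j' (h ▸ hij) x := by
  subst h
  rfl

end Cochain

namespace IsQuasiIso

variable {K : Type} [Field K] {V W : Cochain K} {φ : ChainMap K V W}

lemma exists_cocycle_map_eq_add_d (hφ : IsQuasiIso φ) {k i j : ℤ} (hki : k + 1 = i)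
    (hij : i + 1 = j) (y : W.X i) (hy : W.d i j hij y = 0) :
    ∃ (x : V.X i) (z : W.X k), V.d i j hij x = 0 ∧ φ.f i x = y + W.d k i hki z := by
  obtain rfl : j = i + 1 := hij.symm
  obtain rfl : k = i - 1 := by omega
  exact hφ.1 i y hy

lemma exists_eq_d_of_map_eq_d (hφ : IsQuasiIso φ) {k i j : ℤ} (hki : k + 1 = i)
    (hij : i + 1 = j) (x : V.X i) (hx : V.d i j hij x = 0) (z : W.X k)
    (hz : φ.f i x = W.d k i hki z) : ∃ u : V.X k, x = V.d k i hki u := by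
  obtain rfl : j = i + 1 := hij.symm
  obtain rfl : k = i - 1 := by omega
  exact hφ.2 i x hx ⟨z, hz⟩

end IsQuasiIso

section Cylinder

variable {K : Type} [Field K] {V W Vt : Cochain K} (f : ChainMap K V W) (ft : ChainMap K Vt W)

lemma cylD_apply (i j : ℤ) (h : i + 1 = j) (p : CylX V W Vt i) :
    cylD f ft i j h p =
      (V.d i j h p.1,
       W.cast (by omega) (f.f i p.1 - W.d (i - 1) i (by omega) p.2.1 + ft.f i p.2.2),
       Vt.d i j h p.2.2) := by
  simp only [cylD, map_add, map_sub, Cochain.cast_d]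

lemma cylD_eq_zero_iff (i j : ℤ) (h : i + 1 = j) (p : CylX V W Vt i) :
    cylD f ft i j h p = 0 ↔
      V.d i j h p.1 = 0 ∧
      f.f i p.1 - W.d (i - 1) i (by omega) p.2.1 + ft.f i p.2.2 = 0 ∧
      Vt.d i j h p.2.2 = 0 := by
  simp only [cylD_apply, Prod.ext_iff, Prod.fst_zero, Prod.snd_zero,
    map_eq_zero_iff _ (W.cast_injective _)]

variable {f}

theorem exists_cylD_eq_zero_of_d_eq_zero (hf : IsQuasiIso f) (n : ℤ) (vt : Vt.X n)
    (hvt : Vt.d n (n + 1) rfl vt = 0) :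
    ∃ (z : CylX V W Vt n) (u : Vt.X (n - 1)),
      cylD f ft n (n + 1) rfl z = 0 ∧ z.2.2 = vt + Vt.d (n - 1) n (by omega) u := by
  have hcocycle : W.d n (n + 1) rfl (-ft.f n vt) = 0 := by
    rw [map_neg, ← ft.comm, hvt, map_zero, neg_zero]
  obtain ⟨x, z, hx, hfx⟩ :=
    hf.exists_cocycle_map_eq_add_d (by omega : n - 1 + 1 = n) rfl _ hcocycle
  refine ⟨(x, z, vt), 0, (cylD_eq_zero_iff f ft _ _ _ _).2 ⟨hx, ?_, hvt⟩, by simp⟩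
  rw [hfx]
  abel

theorem exists_eq_cylD_of_cylD_eq_zero (hf : IsQuasiIso f) (n : ℤ) (z : CylX V W Vt n)
    (hz : cylD f ft n (n + 1) rfl z = 0)
    (hexact : ∃ u : Vt.X (n - 1), z.2.2 = Vt.d (n - 1) n (by omega) u) :
    ∃ y : CylX V W Vt (n - 1), z = cylD f ft (n - 1) n (by omega) y := by
  obtain ⟨v, w, vt⟩ := z
  obtain ⟨u, rfl : vt = _⟩ := hexact
  have hn : n - 1 + 1 = n := by omega
  obtain ⟨hv, hw, -⟩ := (cylD_eq_zero_iff f ft _ _ _ _).1 hz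
  rw [ft.comm _ _ hn] at hw
  have hfv : f.f n v = W.d (n - 1) n hn (w - ft.f (n - 1) u) := by
    rw [map_sub]
    linear_combination (norm := module) hw
  obtain ⟨v', rfl⟩ := hf.exists_eq_d_of_map_eq_d hn rfl v hv _ hfv
  have hy : W.d (n - 1) n hn (w - f.f (n - 1) v' - ft.f (n - 1) u) = 0 := by
    rw [map_sub, map_sub, ← f.comm]
    linear_combination (norm := module) -hw
  obtain ⟨c, z', hc, hfc⟩ :=
    hf.exists_cocycle_map_eq_add_d (by omega : n - 1 - 1 + 1 = n - 1) hn _ hy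
  refine ⟨(v' + c, z', u), ?_⟩
  simp only [cylD_apply, Cochain.cast_refl, map_add, hc, add_zero, hfc]
  ext <;> simp only
  abel

end Cylinder

/-- If `f : V → W` and `f̃ : Ṽ → W` are quasi-isomorphisms, then the canonical
projection `π_Ṽ : Cyl(f, f̃) → Ṽ`, `π_Ṽ (v + s w + ṽ) = ṽ`, is a
quasi-isomorphism: it induces an isomorphism on cohomology in every degree
(surjectivity and injectivity on cohomology classes). -/
theorem cylinder_projection_Vt_quasiIso {K : Type} [Field K]
    {V W Vt : Cochain K} (f : ChainMap K V W) (ft : ChainMap K Vt W)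
    (hf : IsQuasiIso f) :
    (∀ (n : ℤ) (vt : Vt.X n), Vt.d n (n + 1) rfl vt = 0 →
        ∃ (z : CylX V W Vt n) (u : Vt.X (n - 1)),
          cylD f ft n (n + 1) rfl z = 0 ∧
          z.2.2 = vt + Vt.d (n - 1) n (by omega) u) ∧
    (∀ (n : ℤ) (z : CylX V W Vt n), cylD f ft n (n + 1) rfl z = 0 →
        (∃ u : Vt.X (n - 1), z.2.2 = Vt.d (n - 1) n (by omega) u) →
        ∃ y : CylX V W Vt (n - 1), z = cylD f ft (n - 1) n (by omega) y) :=
  ⟨exists_cylD_eq_zero_of_d_eq_zero ft hf, exists_eq_cylD_of_cylD_eq_zero ft hf⟩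
end

section
/- Let φ : V → V′ be a quasi-isomorphism of cochain complexes of K-vector spaces and let U be any cochain complex of K-vector spaces. Then the induced chain map Hom(U, φ) : Hom(U, V) → Hom(U, V′), given by postcomposition with φ, is a quasi-isomorphism of Hom-complexes. -/
/-- The index set of the degree `n` part of the Hom-complex: pairs `(p, q)`
with `p + n = q`. -/
abbrev HIdx (n : ℤ) : Type := {pq : ℤ × ℤ // pq.1 + n = pq.2}

/-- The degree `n` component of the Hom-complex `Hom(U, V)`:
`Hom(U, V)^n = ∏_p Hom_K (U^p, V^(p+n))`; the target degree `q = p + n` is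
recorded in the index to avoid dependent rewriting. -/
abbrev HX {K : Type} [Field K] (U V : Cochain K) (n : ℤ) : Type :=
  ∀ i : HIdx n, (U.X i.1.1 →ₗ[K] V.X i.1.2)

/-- The differential of the Hom-complex: `d φ = ∂_V ∘ φ - (-1)^m φ ∘ ∂_U` for
`φ` of degree `m`. -/
noncomputable def homD {K : Type} [Field K] (U V : Cochain K) (m n : ℤ)
    (h : m + 1 = n) : HX U V m → HX U V n :=
  fun φ i =>
    (V.d (i.1.2 - 1) i.1.2 (by omega)).comp
        (φ ⟨(i.1.1, i.1.2 - 1), show i.1.1 + m = i.1.2 - 1 by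
          have := i.2; omega⟩)
      - (-1 : K) ^ m •
        ((φ ⟨(i.1.1 + 1, i.1.2), show i.1.1 + 1 + m = i.1.2 by
          have := i.2; omega⟩).comp (U.d i.1.1 (i.1.1 + 1) rfl))

/-- Postcomposition with `φ`: the induced map `Hom(U, φ) : Hom(U, V) → Hom(U, V')`. -/
def homMapPost {K : Type} [Field K] {V V' : Cochain K} (φ : ChainMap K V V')
    (U : Cochain K) (n : ℤ) : HX U V n → HX U V' n :=
  fun ψ i => (φ.f i.1.2).comp (ψ i)

theorem neg_one_zpow_add_one {R : Type*} [DivisionRing R] (m : ℤ) :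
    (-1 : R) ^ (m + 1) = -(-1 : R) ^ m := by
  rw [zpow_add_one₀ (by norm_num), mul_neg_one]

namespace ChainMap

variable {K : Type} [Field K] {U V W : Cochain K}

protected def id (V : Cochain K) : ChainMap K V V where
  f _ := LinearMap.id
  comm _ _ _ _ := rfl

def comp (g : ChainMap K V W) (f : ChainMap K U V) : ChainMap K U W where
  f n := g.f n ∘ₗ f.f n
  comm i j h x := by simp only [LinearMap.comp_apply, f.comm, g.comm]

def Homotopic (f g : ChainMap K V W) : Prop :=
  ∃ h : ∀ i j : ℤ, i + 1 = j → (V.X j →ₗ[K] W.X i),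
    ∀ (i j k : ℤ) (hij : i + 1 = j) (hjk : j + 1 = k) (x : V.X j),
      f.f j x = g.f j x + W.d i j hij (h i j hij x) + h j k hjk (V.d j k hjk x)

def IsHomotopyEquiv (φ : ChainMap K V W) : Prop :=
  ∃ ψ : ChainMap K W V,
    Homotopic (ψ.comp φ) (ChainMap.id V) ∧ Homotopic (φ.comp ψ) (ChainMap.id W)

theorem IsHomotopyEquiv.isQuasiIso {φ : ChainMap K V W} (hφ : IsHomotopyEquiv φ) :
    IsQuasiIso φ := by
  obtain ⟨ψ, ⟨a, ha⟩, ⟨b, hb⟩⟩ := hφ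
  refine ⟨fun n y hy => ⟨ψ.f n y, b (n - 1) n (by omega) y, ?_, ?_⟩, fun n x hx ⟨z, hz⟩ => ?_⟩
  · rw [← ψ.comm, hy, map_zero]
  · simpa [comp, ChainMap.id, hy] using hb (n - 1) n (n + 1) (by omega) rfl y
  · refine ⟨ψ.f (n - 1) z - a (n - 1) n (by omega) x, ?_⟩
    have hψφ := ha (n - 1) n (n + 1) (by omega) rfl x
    simp only [comp, ChainMap.id, LinearMap.comp_apply, LinearMap.id_apply, hx, map_zero,
      add_zero, hz, ψ.comm] at hψφ
    rw [map_sub, hψφ]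
    abel

end ChainMap

namespace Cochain

variable {K : Type} [Field K]

noncomputable def hom (U V : Cochain K) : Cochain K where
  X := HX U V
  d m n h :=
    { toFun := homD U V m n h
      map_add' x y := by
        funext i; ext u
        simp only [homD, Pi.add_apply, LinearMap.sub_apply, LinearMap.comp_apply,
          LinearMap.add_apply, LinearMap.smul_apply, map_add, smul_add]
        abel
      map_smul' c x := by
        funext i; ext u
        simp only [homD, Pi.smul_apply, LinearMap.sub_apply, LinearMap.comp_apply,
          LinearMap.smul_apply, map_smul, RingHom.id_apply, smul_sub, smul_comm c] }
  dd m n k hmn hnk x := by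
    subst hmn
    funext i; ext u
    simp only [homD, LinearMap.coe_mk, AddHom.coe_mk, LinearMap.sub_apply, LinearMap.comp_apply,
      LinearMap.smul_apply, map_sub, map_smul, V.dd, U.dd, map_zero, smul_zero, sub_zero,
      zero_sub, Pi.zero_apply, LinearMap.zero_apply]
    rw [neg_one_zpow_add_one, neg_smul, sub_neg_eq_add, neg_add_cancel]

end Cochain

namespace HX

variable {K : Type} [Field K] {U V W : Cochain K}

variable {n : ℤ} (y : HX U V n) {p q q' : ℤ} (hq : q = q')
  (hpq : p + n = q) (hpq' : p + n = q') (u : U.X p)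
include hq

theorem d_apply_congr {r : ℤ} (h : q + 1 = r) (h' : q' + 1 = r) :
    V.d q r h (y ⟨(p, q), hpq⟩ u) = V.d q' r h' (y ⟨(p, q'), hpq'⟩ u) := by
  subst hq; rfl

theorem family_apply_congr (t : ∀ i j : ℤ, i + 1 = j → (V.X j →ₗ[K] W.X i)) {r : ℤ}
    (h : r + 1 = q) (h' : r + 1 = q') :
    t r q h (y ⟨(p, q), hpq⟩ u) = t r q' h' (y ⟨(p, q'), hpq'⟩ u) := by
  subst hq; rfl

end HX

namespace ChainMap

variable {K : Type} [Field K] {U V W : Cochain K}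

noncomputable def postcomp (U : Cochain K) (φ : ChainMap K V W) :
    ChainMap K (U.hom V) (U.hom W) where
  f n :=
    { toFun := homMapPost φ U n
      map_add' _ _ := funext fun _ => LinearMap.comp_add _ _ _
      map_smul' _ _ := funext fun _ => LinearMap.comp_smul _ _ _ }
  comm m n h x := by
    show homMapPost φ U n (homD U V m n h x) = homD U W m n h (homMapPost φ U m x)
    funext i; ext u
    simp [homD, homMapPost, φ.comm]


noncomputable def postcompHomotopy (U : Cochain K) (h : ∀ i j : ℤ, i + 1 = j → (V.X j →ₗ[K] W.X i))
    (m n : ℤ) (hmn : m + 1 = n) : HX U V n →ₗ[K] HX U W m where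
  toFun y i := h i.1.2 (i.1.2 + 1) rfl ∘ₗ y ⟨(i.1.1, i.1.2 + 1), by grind⟩
  map_add' _ _ := funext fun _ => LinearMap.comp_add _ _ _
  map_smul' _ _ := funext fun _ => LinearMap.comp_smul _ _ _

theorem homMapPost_eq_add_homD {f g : ChainMap K V W}
    {h : ∀ i j : ℤ, i + 1 = j → (V.X j →ₗ[K] W.X i)}
    (hh : ∀ (i j k : ℤ) (hij : i + 1 = j) (hjk : j + 1 = k) (x : V.X j),
      f.f j x = g.f j x + W.d i j hij (h i j hij x) + h j k hjk (V.d j k hjk x))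
    (i j k : ℤ) (hij : i + 1 = j) (hjk : j + 1 = k) (y : HX U V j) :
    homMapPost f U j y = homMapPost g U j y + homD U W i j hij (postcompHomotopy U h i j hij y)
      + postcompHomotopy U h j k hjk (homD U V j k hjk y) := by
  subst hij
  funext ⟨⟨p, q⟩, hpq⟩
  ext u
  simp only [postcompHomotopy, homD, homMapPost, LinearMap.coe_mk, AddHom.coe_mk,
    Pi.add_apply, LinearMap.add_apply, LinearMap.sub_apply, LinearMap.comp_apply,
    LinearMap.smul_apply, map_sub, map_smul]
  rw [HX.family_apply_congr y (show q - 1 + 1 = q by omega) _ hpq u h _ (by omega),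
    ← HX.d_apply_congr y (show q = q + 1 - 1 by omega) hpq _ u rfl,
    hh (q - 1) q (q + 1) (by omega) rfl, neg_one_zpow_add_one, neg_smul]
  abel

theorem Homotopic.postcomp (U : Cochain K) {f g : ChainMap K V W} (hfg : Homotopic f g) :
    Homotopic (f.postcomp U) (g.postcomp U) :=
  let ⟨h, hh⟩ := hfg
  ⟨postcompHomotopy U h, homMapPost_eq_add_homD hh⟩

theorem IsHomotopyEquiv.postcomp (U : Cochain K) {φ : ChainMap K V W}
    (hφ : IsHomotopyEquiv φ) : IsHomotopyEquiv (φ.postcomp U) :=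
  let ⟨ψ, hψφ, hφψ⟩ := hφ
  ⟨ψ.postcomp U, hψφ.postcomp U, hφψ.postcomp U⟩

end ChainMap

namespace Cochain

variable {K : Type} [Field K] (C : Cochain K)

def IsAcyclic : Prop :=
  ∀ (i j : ℤ) (h : i + 1 = j) (y : C.X j), C.d j (j + 1) rfl y = 0 → ∃ x, C.d i j h x = y

def IsContraction (s : ∀ i j : ℤ, i + 1 = j → (C.X j →ₗ[K] C.X i)) : Prop :=
  ∀ (i j k : ℤ) (hij : i + 1 = j) (hjk : j + 1 = k) (x : C.X j),
    C.d i j hij (s i j hij x) + s j k hjk (C.d j k hjk x) = x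

variable {C}

/-- With `π` a projection onto the cocycles and `σ` a section of `d` over them,
`s = (1 - π) σ π` satisfies `d s = π` and `s d = 1 - π`. -/
theorem IsAcyclic.exists_contraction (hC : C.IsAcyclic) : ∃ s, C.IsContraction s := by
  let Z (j : ℤ) := LinearMap.ker (C.d j (j + 1) rfl)
  obtain ⟨π, hπ⟩ : ∃ π : ∀ j, C.X j →ₗ[K] Z j, ∀ j, π j ∘ₗ (Z j).subtype = LinearMap.id :=
    ⟨_, fun j => (LinearMap.exists_leftInverse_of_injective _ (Z j).ker_subtype).choose_spec⟩
  have hσ (i j : ℤ) (h : i + 1 = j) : ∃ σ : Z j →ₗ[K] C.X i, ∀ z, C.d i j h (σ z) = z := by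
    let dZ := (C.d i j h).codRestrict (Z j) fun x => C.dd i j (j + 1) h rfl x
    obtain ⟨σ, hσ⟩ := dZ.exists_rightInverse_of_surjective <| LinearMap.range_eq_top.mpr
      fun z => (hC i j h z z.2).imp fun _ hx => Subtype.ext hx
    exact ⟨σ, fun z => congrArg Subtype.val (LinearMap.congr_fun hσ z)⟩
  choose σ hσ using hσ
  have hπZ (j : ℤ) (z : Z j) : π j z = z := LinearMap.congr_fun (hπ j) z
  refine ⟨fun i j h => (LinearMap.id - (Z i).subtype ∘ₗ π i) ∘ₗ σ i j h ∘ₗ π j, ?_⟩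
  intro i j k hij hjk x
  subst hij hjk
  have hdπ (y : C.X i) : C.d i (i + 1) rfl (π i y) = 0 := (π i y).2
  have hsd : π (i + 1 + 1) (C.d (i + 1) (i + 1 + 1) rfl x) = ⟨_, C.dd _ _ _ rfl rfl x⟩ :=
    hπZ _ ⟨_, C.dd _ _ _ rfl rfl x⟩
  set y := σ (i + 1) (i + 1 + 1) rfl ⟨_, C.dd _ _ _ rfl rfl x⟩
  have hy : y - x = π (i + 1) (y - x) := by
    have hyx : y - x ∈ Z (i + 1) := by
      simp [Z, y, hσ]
    exact congrArg Subtype.val (hπZ _ ⟨_, hyx⟩).symm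
  simp only [LinearMap.comp_apply, LinearMap.sub_apply, LinearMap.id_apply, map_sub, hσ, hdπ,
    Submodule.subtype_apply, hsd, sub_zero]
  rw [map_sub, Submodule.coe_sub] at hy
  linear_combination (norm := abel) hy

variable (V : Cochain K)

def castX {i j : ℤ} (h : i = j) : V.X i ≃ₗ[K] V.X j := h ▸ LinearEquiv.refl K (V.X i)

theorem d_castX {i i' j : ℤ} (hi : i = i') (h : i + 1 = j) (h' : i' + 1 = j) (x : V.X i) :
    V.d i' j h' (V.castX hi x) = V.d i j h x := by
  subst hi; rfl

end Cochain

namespace ChainMap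

variable {K : Type} [Field K] {V W : Cochain K}

/-- Reducible, so that `φ.cone.X n` is seen to be the product `V.X (n + 1) × W.X n` when
instances and lemmas about products are looked up. -/
noncomputable abbrev cone (φ : ChainMap K V W) : Cochain K where
  X n := V.X (n + 1) × W.X n
  d i j h := by
    subst h
    exact ((-V.d (i + 1) (i + 1 + 1) rfl) ∘ₗ LinearMap.fst K _ _).prod
      (φ.f (i + 1) ∘ₗ LinearMap.fst K _ _ + W.d i (i + 1) rfl ∘ₗ LinearMap.snd K _ _)
  dd i j k hij hjk x := by
    subst hij hjk
    ext
    · simp [V.dd]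
    · simp [W.dd, φ.comm]

theorem cone_d_apply (φ : ChainMap K V W) (i : ℤ) (x : (cone φ).X i) :
    (cone φ).d i (i + 1) rfl x =
      (-V.d (i + 1) (i + 1 + 1) rfl x.1, φ.f (i + 1) x.1 + W.d i (i + 1) rfl x.2) :=
  rfl

end ChainMap

namespace IsQuasiIso

variable {K : Type} [Field K] {V W : Cochain K} {φ : ChainMap K V W} (hφ : IsQuasiIso φ)
include hφ

theorem exists_cocycle_eq_add_d {i j : ℤ} (h : i + 1 = j) (y : W.X j)
    (hy : W.d j (j + 1) rfl y = 0) :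
    ∃ (x : V.X j) (z : W.X i), V.d j (j + 1) rfl x = 0 ∧ φ.f j x = y + W.d i j h z := by
  obtain rfl : i = j - 1 := by omega
  exact hφ.1 j y hy

theorem exists_eq_d_of_f_eq_d {i j : ℤ} (h : i + 1 = j) (x : V.X j)
    (hx : V.d j (j + 1) rfl x = 0) (z : W.X i) (hz : φ.f j x = W.d i j h z) :
    ∃ u : V.X i, x = V.d i j h u := by
  obtain rfl : i = j - 1 := by omega
  exact hφ.2 j x hx ⟨z, hz⟩

theorem cone_isAcyclic : φ.cone.IsAcyclic := by
  rintro i j rfl ⟨v, w⟩ hvw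
  rw [ChainMap.cone_d_apply] at hvw
  obtain ⟨hv, hw⟩ := Prod.mk.inj hvw
  rw [neg_eq_zero] at hv
  obtain ⟨u, rfl⟩ := hφ.exists_eq_d_of_f_eq_d rfl v hv (-w) (by
    rw [map_neg]; exact eq_neg_of_add_eq_zero_left hw)
  have hc : W.d (i + 1) (i + 1 + 1) rfl (w + φ.f (i + 1) u) = 0 := by
    rw [map_add, ← φ.comm]
    exact (add_comm _ _).trans hw
  obtain ⟨x, z, hx, hxz⟩ := hφ.exists_cocycle_eq_add_d rfl _ hc
  refine ⟨(x - u, -z), ?_⟩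
  rw [ChainMap.cone_d_apply, map_sub, hx, map_sub, hxz]
  refine Prod.ext ?_ ?_
  · simp
  · simp only [map_neg]
    abel

end IsQuasiIso

namespace ChainMap

variable {K : Type} [Field K] {V W : Cochain K} {φ : ChainMap K V W}
  {s : ∀ i j : ℤ, i + 1 = j → (φ.cone.X j →ₗ[K] φ.cone.X i)}

theorem castX_fst_cone_congr {i i' j : ℤ} (hi : i + 1 = i' + 1) (h : i + 1 = j) (h' : i' + 1 = j)
    (y : φ.cone.X j) : V.castX hi (s i j h y).1 = (s i' j h' y).1 := by
  obtain rfl : i = i' := by omega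
  rfl

theorem fst_cone_castX_congr {i j j' : ℤ} (hj : j + 1 = j' + 1) (h : i + 1 = j) (h' : i + 1 = j')
    (v : V.X (j + 1)) : (s i j' h' (V.castX hj v, 0)).1 = (s i j h (v, 0)).1 := by
  obtain rfl : j = j' := by omega
  rfl

end ChainMap

namespace Cochain.IsContraction

open ChainMap

variable {K : Type} [Field K] {V W : Cochain K} {φ : ChainMap K V W}
  {s : ∀ i j : ℤ, i + 1 = j → (φ.cone.X j →ₗ[K] φ.cone.X i)} (hs : φ.cone.IsContraction s)
include hs

theorem cone_spec (i : ℤ) (x : φ.cone.X (i + 1)) :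
    (-V.d (i + 1) (i + 1 + 1) rfl (s i (i + 1) rfl x).1, φ.f (i + 1) (s i (i + 1) rfl x).1
        + W.d i (i + 1) rfl (s i (i + 1) rfl x).2)
      + s (i + 1) (i + 1 + 1) rfl
        (-V.d (i + 1 + 1) (i + 1 + 1 + 1) rfl x.1, φ.f (i + 1 + 1) x.1
          + W.d (i + 1) (i + 1 + 1) rfl x.2) = x :=
  hs i (i + 1) (i + 1 + 1) rfl rfl x

theorem d_fst_cone_inr {i j : ℤ} (h : i + 1 = j) (w : W.X j) :
    V.d (i + 1) (j + 1) (by omega) (s i j h (0, w)).1 =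
      (s j (j + 1) rfl (0, W.d j (j + 1) rfl w)).1 := by
  subst h
  have := congrArg Prod.fst (hs.cone_spec i (0, w))
  simp only [Prod.fst_add, map_zero, neg_zero, zero_add] at this
  exact neg_add_eq_zero.mp this

theorem snd_cone_inr (i : ℤ) (w : W.X (i + 1)) :
    φ.f (i + 1) (s i (i + 1) rfl (0, w)).1 + W.d i (i + 1) rfl (s i (i + 1) rfl (0, w)).2
      + (s (i + 1) (i + 1 + 1) rfl (0, W.d (i + 1) (i + 1 + 1) rfl w)).2 = w := by
  have := congrArg Prod.snd (hs.cone_spec i (0, w))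
  simpa only [Prod.snd_add, map_zero, neg_zero, zero_add, add_assoc] using this

theorem fst_cone_inr_f {i j : ℤ} (h : i + 1 = j) (v : V.X (j + 1)) :
    (s j (j + 1) rfl (0, φ.f (j + 1) v)).1 = v + V.d (i + 1) (j + 1) (by omega) (s i j h (v, 0)).1
      + (s j (j + 1) rfl (V.d (j + 1) (j + 1 + 1) rfl v, 0)).1 := by
  subst h
  have := congrArg Prod.fst (hs.cone_spec i (v, 0))
  have hsplit : ((-V.d (i + 1 + 1) (i + 1 + 1 + 1) rfl v, φ.f (i + 1 + 1) v + W.d _ _ rfl 0) :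
      φ.cone.X (i + 1 + 1)) =
        -(V.d (i + 1 + 1) (i + 1 + 1 + 1) rfl v, 0) + (0, φ.f (i + 1 + 1) v) := by
    simp
  simp only [hsplit, map_add, map_neg, Prod.fst_add, Prod.fst_neg] at this
  linear_combination (norm := abel) this

/-- The `W`-to-`V` block of a contraction of the cone is a homotopy inverse of `φ`. -/
noncomputable def coneInv : ChainMap K W V where
  f n := (V.castX (by omega)).toLinearMap ∘ₗ LinearMap.fst K _ _ ∘ₗ s (n - 1) n (by omega) ∘ₗ
    LinearMap.inr K _ _
  comm i j h w := by
    subst h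
    simp only [LinearMap.comp_apply, LinearMap.inr_apply, LinearMap.fst_apply,
      LinearEquiv.coe_coe]
    rw [castX_fst_cone_congr _ _ rfl, V.d_castX _ (by omega), hs.d_fst_cone_inr (by omega)]

theorem coneInv_f_apply (i : ℤ) (w : W.X (i + 1)) :
    hs.coneInv.f (i + 1) w = (s i (i + 1) rfl (0, w)).1 :=
  castX_fst_cone_congr _ _ rfl _

theorem isHomotopyEquiv : IsHomotopyEquiv φ := by
  refine ⟨hs.coneInv,
    ⟨fun i j h => (V.castX (by omega)).toLinearMap ∘ₗ LinearMap.fst K _ _ ∘ₗ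
      s (i - 1) (j - 1) (by omega) ∘ₗ LinearMap.inl K _ _ ∘ₗ (V.castX (by omega)).toLinearMap, ?_⟩,
    ⟨fun i j h => -(LinearMap.snd K _ _ ∘ₗ s i j h ∘ₗ LinearMap.inr K _ _), ?_⟩⟩
  · rintro i j k rfl rfl x
    simp only [ChainMap.comp, ChainMap.id, LinearMap.comp_apply, LinearMap.id_apply,
      LinearMap.inl_apply, LinearMap.fst_apply, LinearEquiv.coe_coe]
    rw [coneInv_f_apply, hs.fst_cone_inr_f (show i - 1 + 1 = i by omega), V.d_castX _ (by omega),
      fst_cone_castX_congr (j := i) _ (by omega), fst_cone_castX_congr (j := i + 1) _ (by omega),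
      castX_fst_cone_congr _ _ rfl]
  · rintro i j k rfl rfl y
    simp only [ChainMap.comp, ChainMap.id, LinearMap.comp_apply, LinearMap.id_apply,
      LinearMap.inr_apply, LinearMap.snd_apply, LinearMap.neg_apply, map_neg, coneInv_f_apply]
    linear_combination (norm := abel) hs.snd_cone_inr i y

end Cochain.IsContraction

theorem IsQuasiIso.isHomotopyEquiv {K : Type} [Field K] {V W : Cochain K} {φ : ChainMap K V W}
    (hφ : IsQuasiIso φ) : ChainMap.IsHomotopyEquiv φ :=
  let ⟨_, hs⟩ := hφ.cone_isAcyclic.exists_contraction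
  hs.isHomotopyEquiv

/-- If `φ : V → V'` is a quasi-isomorphism of cochain complexes of `K`-vector
spaces and `U` is any cochain complex of `K`-vector spaces, then the induced
chain map `Hom(U, φ) : Hom(U, V) → Hom(U, V')` (postcomposition with `φ`) is a
quasi-isomorphism of Hom-complexes. -/
theorem hom_postcomposition_quasiIso {K : Type} [Field K]
    {V V' : Cochain K} (U : Cochain K) (φ : ChainMap K V V')
    (hφ : IsQuasiIso φ) :
    (∀ (n : ℤ) (y : HX U V' n), homD U V' n (n + 1) rfl y = 0 →
        ∃ (x : HX U V n) (z : HX U V' (n - 1)),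
          homD U V n (n + 1) rfl x = 0 ∧
          homMapPost φ U n x = y + homD U V' (n - 1) n (by omega) z) ∧
    (∀ (n : ℤ) (x : HX U V n), homD U V n (n + 1) rfl x = 0 →
        (∃ z : HX U V' (n - 1), homMapPost φ U n x = homD U V' (n - 1) n (by omega) z) →
        ∃ u : HX U V (n - 1), x = homD U V (n - 1) n (by omega) u) :=
  (hφ.isHomotopyEquiv.postcomp U).isQuasiIso
end
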